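/- arXiv:1207.2962 — 3 statements merged into one kernel-verified Lean document; each statement's English description precedes it below -/
import Mathlib

section
/- For homogeneous square graded matrices S, T over a (ℤ/2)^n-commutative algebra A, of degrees s and t respectively, the graded transpose satisfies ᵍᵗ(ST) = (-1)^⟨s,t⟩ ᵍᵗT · ᵍᵗS. -/
/-- The standard `ℤ/2`-valued scalar product on `(ℤ/2)ⁿ`. -/
def ip {n : ℕ} (x y : Fin n → ZMod 2) : ZMod 2 := ∑ i, x i * y i

/-- The graded transpose of a square graded matrix `T` of degree `γ` with respect
to a homogeneous basis of degrees `degE`: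
`(ᵍᵗT)ⁱⱼ = (-1)^⟨γ + degE j, degE i + degE j⟩ Tʲᵢ`. -/
def gTranspose {n r : ℕ} {A : Type*} [Ring A] (degE : Fin r → (Fin n → ZMod 2))
    (γ : Fin n → ZMod 2) (T : Matrix (Fin r) (Fin r) A) : Matrix (Fin r) (Fin r) A :=
  fun i j => (-1 : A) ^ (ip (γ + degE j) (degE i + degE j)).val * T j i

lemma neg_one_pow_mod {A : Type*} [Ring A] (m : ℕ) : (-1 : A) ^ (m % 2) = (-1) ^ m := by
  conv_rhs => rw [← Nat.div_add_mod m 2]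
  rw [pow_add, pow_mul, neg_one_sq, one_pow, one_mul]

lemma neg_one_pow_val_add {A : Type*} [Ring A] (a b : ZMod 2) :
    (-1 : A) ^ ((a + b).val) = (-1) ^ a.val * (-1) ^ b.val := by
  rw [ZMod.val_add, neg_one_pow_mod, pow_add]

lemma ip_key {n : ℕ} (s t di dj dk : Fin n → ZMod 2) :
    ip (s + t + dj) (di + dj) =
      ip s t + ip (t + dk) (di + dk) + ip (s + dj) (dk + dj) + ip (t + dk + di) (s + dj + dk) := by
  simp only [ip, ← Finset.sum_add_distrib]
  apply Finset.sum_congr rfl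
  intro x _
  simp only [Pi.add_apply]
  generalize s x = a; generalize t x = b; generalize di x = c; generalize dj x = d
  generalize dk x = e
  revert a b c d e; decide

/-- For homogeneous square graded matrices `S, T` of degrees `s, t` over a
`(ℤ/2)ⁿ`-commutative algebra, `ᵍᵗ(ST) = (-1)^⟨s,t⟩ ᵍᵗT ᵍᵗS`. -/
theorem stmt10 (n r : ℕ) (A : Type*) [Ring A]
    (𝒜 : (Fin n → ZMod 2) → AddSubgroup A)
    (hcomm : ∀ (α β : Fin n → ZMod 2) (a b : A), a ∈ 𝒜 α → b ∈ 𝒜 β →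
      a * b = (-1 : A) ^ (ip α β).val * (b * a))
    (degE : Fin r → (Fin n → ZMod 2)) (s t : Fin n → ZMod 2)
    (S T : Matrix (Fin r) (Fin r) A)
    (hS : ∀ i j, S i j ∈ 𝒜 (s + degE i + degE j))
    (hT : ∀ i j, T i j ∈ 𝒜 (t + degE i + degE j)) :
    gTranspose degE (s + t) (S * T)
      = (-1 : A) ^ (ip s t).val • (gTranspose degE t T * gTranspose degE s S) := by
  have hc : ∀ (m : ℕ) (x : A), x * (-1 : A) ^ m = (-1 : A) ^ m * x :=
    fun m x => ((Commute.neg_one_left x).pow_left m).eq.symm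
  ext i j
  simp only [gTranspose, Matrix.mul_apply, Matrix.smul_apply, smul_eq_mul]
  rw [Finset.mul_sum, Finset.mul_sum]
  apply Finset.sum_congr rfl
  intro k _
  have hsw := hcomm (t + degE k + degE i) (s + degE j + degE k) (T k i) (S j k)
    (hT k i) (hS j k)
  calc (-1 : A) ^ (ip (s + t + degE j) (degE i + degE j)).val * (S j k * T k i)
      = (-1 : A) ^ (ip s t + ip (t + degE k) (degE i + degE k) + ip (s + degE j) (degE k + degE j)
          + ip (t + degE k + degE i) (s + degE j + degE k)).val * (S j k * T k i) := by
        rw [ip_key s t (degE i) (degE j) (degE k)]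
    _ = (-1 : A) ^ (ip s t).val * ((-1 : A) ^ (ip (t + degE k) (degE i + degE k)).val *
          ((-1 : A) ^ (ip (s + degE j) (degE k + degE j)).val *
          ((-1 : A) ^ (ip (t + degE k + degE i) (s + degE j + degE k)).val * (S j k * T k i)))) := by
        simp only [neg_one_pow_val_add]; noncomm_ring
    _ = (-1 : A) ^ (ip s t).val * ((-1 : A) ^ (ip (t + degE k) (degE i + degE k)).val *
          ((-1 : A) ^ (ip (s + degE j) (degE k + degE j)).val * (T k i * S j k))) := by
        rw [hsw]
    _ = (-1 : A) ^ (ip s t).val * ((-1 : A) ^ (ip (t + degE k) (degE i + degE k)).val * T k i *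
          ((-1 : A) ^ (ip (s + degE j) (degE k + degE j)).val * S j k)) := by
        rw [mul_assoc _ (T k i), ← mul_assoc (T k i), hc, mul_assoc]
end

section
/- For a block-diagonal superinvertible degree-0 matrix T = diag(A,B) over a supercommutative algebra (case n = 1), the induced action φ on the class [ξ₁⋯ξ_r] in H^r of the Koszul complex (where φ acts by T on ΠM and by the super transpose inverse on M*) is multiplication by det(A)·det(B)⁻¹ = Ber(T). -/
open Finset Equiv

lemma alt_map_matrix {R M N : Type*} [CommRing R] [AddCommGroup M] [Module R M]
    [AddCommGroup N] [Module R N] {n : ℕ} (f : M [⋀^Fin n]→ₗ[R] N)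
    (C : Matrix (Fin n) (Fin n) R) (v : Fin n → M) :
    f (fun i => ∑ j, C i j • v j) = C.det • f v := by
  have h1 : f (fun i => ∑ j, C i j • v j)
      = ∑ r : Fin n → Fin n, (∏ i, C i (r i)) • f (v ∘ r) := by
    have := f.toMultilinearMap.map_sum (α := fun _ : Fin n => Fin n)
      (g := fun i j => C i j • v j)
    rw [show (⇑f.toMultilinearMap : (Fin n → M) → N) = ⇑f from rfl] at this
    rw [this]
    refine Finset.sum_congr rfl fun r _ => ?_
    exact f.toMultilinearMap.map_smul_univ (fun i => C i (r i)) (fun i => v (r i))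
  rw [h1]
  rw [← Finset.sum_filter_add_sum_filter_not Finset.univ (fun r => Function.Bijective r)]
  have h2 : ∑ r ∈ Finset.univ.filter (fun r : Fin n → Fin n => ¬ Function.Bijective r),
      (∏ i, C i (r i)) • f (v ∘ r) = 0 := by
    refine Finset.sum_eq_zero fun r hr => ?_
    simp only [Finset.mem_filter] at hr
    obtain ⟨i, j, hij, hne⟩ : ∃ i j, r i = r j ∧ i ≠ j := by
      have := hr.2
      rw [← Finite.injective_iff_bijective, Function.Injective] at this
      push_neg at this
      exact this
    rw [f.map_eq_zero_of_eq (v ∘ r) (by simp [Function.comp, hij]) hne, smul_zero]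
  rw [h2, add_zero]
  have h3 : ∑ r ∈ Finset.univ.filter (fun r : Fin n → Fin n => Function.Bijective r),
      (∏ i, C i (r i)) • f (v ∘ r)
      = ∑ σ : Perm (Fin n), (∏ i, C i (σ i)) • f (v ∘ σ) := by
    refine Finset.sum_bij (fun r hr => Equiv.ofBijective r (Finset.mem_filter.mp hr).2)
      (fun _ _ => Finset.mem_univ _) ?_ ?_ ?_
    · intro a ha b hb h
      exact congrArg (fun e : Equiv.Perm (Fin n) => ⇑e) h
    · intro σ _
      exact ⟨σ, Finset.mem_filter.mpr ⟨Finset.mem_univ _, σ.bijective⟩, Equiv.coe_fn_injective rfl⟩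
    · intro r hr; rfl
  rw [h3]
  have h4 : C.det = ∑ σ : Perm (Fin n), ((Perm.sign σ : ℤ) : R) * ∏ i, C i (σ i) := by
    rw [← Matrix.det_transpose, Matrix.det_apply']
    rfl
  rw [h4, Finset.sum_smul]
  refine Finset.sum_congr rfl fun σ _ => ?_
  rw [f.map_perm v σ, mul_smul, Int.cast_smul_eq_zsmul, Units.smul_def, smul_comm]

lemma prod_ofFn_sum_smul {R K : Type*} [CommRing R] [Ring K] [Algebra R K] {n : ℕ}
    (η : Fin n → K)
    (hanti : ∀ i j, i ≠ j → η i * η j = -(η j * η i))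
    (hsq : ∀ i, η i * η i = 0)
    (C : Matrix (Fin n) (Fin n) R) :
    (List.ofFn (fun i => ∑ j, C i j • η j)).prod = C.det • (List.ofFn η).prod := by
  classical
  set φ : (Fin n → R) →ₗ[R] K := ∑ i, (LinearMap.proj i).smulRight (η i) with hφdef
  have hφ : ∀ m, φ m = ∑ i, m i • η i := by
    intro m
    simp [hφdef]
  have key : ∀ i j : Fin n, η i * η j + η j * η i = 0 := by
    intro i j
    rcases eq_or_ne i j with rfl | h
    · simp [hsq i]
    · rw [hanti i j h, neg_add_cancel]
  have hφsq : ∀ m, φ m * φ m = 0 := by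
    intro m
    rw [hφ, Finset.sum_mul_sum, ← Finset.sum_product']
    refine Finset.sum_ninvolution (fun p => (p.2, p.1)) ?_ ?_ (fun _ => Finset.mem_univ _)
      (fun p => rfl)
    · intro p
      rw [smul_mul_smul_comm, smul_mul_smul_comm, mul_comm (m p.2) (m p.1), ← smul_add,
        key p.1 p.2, smul_zero]
    · intro p hne hfix
      apply hne
      have h21 : p.2 = p.1 := congrArg Prod.fst hfix
      rw [h21, smul_mul_smul_comm, hsq, smul_zero]
  let F : ExteriorAlgebra R (Fin n → R) →ₐ[R] K := ExteriorAlgebra.lift R ⟨φ, hφsq⟩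
  let g : (Fin n → R) [⋀^Fin n]→ₗ[R] K :=
    F.toLinearMap.compAlternatingMap (ExteriorAlgebra.ιMulti R n)
  have hg : ∀ w : Fin n → (Fin n → R), g w = (List.ofFn fun i => φ (w i)).prod := by
    intro w
    show F (ExteriorAlgebra.ιMulti R n w) = _
    rw [ExteriorAlgebra.ιMulti_apply, map_list_prod, List.map_ofFn]
    have : (⇑F ∘ fun i => ExteriorAlgebra.ι R (w i)) = fun i => φ (w i) := by
      funext i
      simp [Function.comp, F, ExteriorAlgebra.lift_ι_apply]
    rw [this]
  let e : Fin n → (Fin n → R) := fun j => Pi.single j 1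
  have he : ∀ j, φ (e j) = η j := by
    intro j
    rw [hφ]
    simp [e, Pi.single_apply, ite_smul, Finset.sum_ite_eq']
  have main := alt_map_matrix g C e
  have lhs : g (fun i => ∑ j, C i j • e j) = (List.ofFn (fun i => ∑ j, C i j • η j)).prod := by
    rw [hg]
    have : (fun i => φ (∑ j, C i j • e j)) = fun i => ∑ j, C i j • η j := by
      funext i
      rw [map_sum]
      exact Finset.sum_congr rfl fun j _ => by rw [map_smul, he]
    rw [this]
  have rhs : g e = (List.ofFn η).prod := by
    rw [hg]
    have : (fun i => φ (e i)) = η := funext he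
    rw [this]
  rw [lhs, rhs] at main
  exact main

/-- Super case (`n = 1`).  For a block-diagonal degree-0 matrix `T = diag(A, B)`
acting on the odd generators `ξ₁,…,ξ_r` (`r = r' + r''`) of the Koszul complex of
a free module of rank `(r', r'')` over a supercommutative algebra — by `A` on the
first block and by the super transpose of `B⁻¹` on the second — the induced map
on the top class is multiplication by `det(A)·det(B)⁻¹ = Ber(T)`.  The degree-0
matrix entries are taken in a commutative subring `R` of even central elements;
the odd generators pairwise anticommute and square to zero. -/
theorem stmt18 (r' r'' : ℕ) (R K : Type*) [CommRing R] [Ring K] [Algebra R K]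
    (ξ : Fin (r' + r'') → K)
    (hanti : ∀ i j, i ≠ j → ξ i * ξ j = -(ξ j * ξ i))
    (hsq : ∀ i, ξ i * ξ i = 0)
    (Aev : Matrix (Fin r') (Fin r') R)
    (B Binv : Matrix (Fin r'') (Fin r'') R)
    (hB₁ : B * Binv = 1) (hB₂ : Binv * B = 1) :
    (List.ofFn (fun i : Fin r' => ∑ j : Fin r', Aev j i • ξ (Fin.castAdd r'' j))).prod *
    (List.ofFn (fun i : Fin r'' => ∑ j : Fin r'', Binv i j • ξ (Fin.natAdd r' j))).prod
      = (Aev.det * Binv.det) • (List.ofFn ξ).prod := by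
  have h1 : (List.ofFn (fun i : Fin r' => ∑ j : Fin r', Aev j i • ξ (Fin.castAdd r'' j))).prod
      = Aev.det • (List.ofFn (fun j : Fin r' => ξ (Fin.castAdd r'' j))).prod := by
    have := prod_ofFn_sum_smul (fun j : Fin r' => ξ (Fin.castAdd r'' j))
      (fun i j hij => hanti _ _ (by simpa [Fin.ext_iff] using hij))
      (fun i => hsq _) Aev.transpose
    simpa [Matrix.det_transpose, Matrix.transpose_apply] using this
  have h2 : (List.ofFn (fun i : Fin r'' => ∑ j : Fin r'', Binv i j • ξ (Fin.natAdd r' j))).prod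
      = Binv.det • (List.ofFn (fun j : Fin r'' => ξ (Fin.natAdd r' j))).prod :=
    prod_ofFn_sum_smul (fun j : Fin r'' => ξ (Fin.natAdd r' j))
      (fun i j hij => hanti _ _ (by simpa [Fin.ext_iff] using hij))
      (fun i => hsq _) Binv
  have h3 : (List.ofFn ξ).prod
      = (List.ofFn (fun j : Fin r' => ξ (Fin.castAdd r'' j))).prod *
        (List.ofFn (fun j : Fin r'' => ξ (Fin.natAdd r' j))).prod := by
    rw [List.ofFn_add, List.prod_append]
    rfl
  rw [h1, h2, h3, smul_mul_assoc, mul_smul_comm, smul_smul]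
end

section
/- Let A be a (ℤ/2)^n-commutative algebra, and L_S the derivation of K = S_A(ΠM ⊕ M*) associated to a homogeneous square matrix S of degree |S| (acting by S on ΠM and by -ᵍᵗS on M*). Then [L_S, d] = 0 (with d = left multiplication by Σᵢ Πeᵢ εⁱ) if and only if ⟨|S|, π⟩ = 0. In particular [L_S,d] = 0 holds for all matrices of degree 0, and if n is odd and π = (1,1,…,1), it holds for all matrices of even degree. -/

private lemma ip_add_right {n : ℕ} (s a b : Fin n → ZMod 2) :
    ip s (a + b) = ip s a + ip s b := by
  simp [ip, mul_add, Finset.sum_add_distrib]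

private lemma ip_comm {n : ℕ} (a b : Fin n → ZMod 2) : ip a b = ip b a := by
  simp [ip, mul_comm]

private lemma sgn_add {K : Type*} [Ring K] (a b : ZMod 2) :
    ((-1 : K)) ^ (a + b).val = (-1 : K) ^ a.val * (-1 : K) ^ b.val := by
  rw [← pow_add, neg_one_pow_eq_pow_mod_two, neg_one_pow_eq_pow_mod_two (n := a.val + b.val)]
  congr 1
  revert a b; decide

private lemma sgn_sq {K : Type*} [Ring K] (a : ZMod 2) :
    ((-1 : K)) ^ a.val * (-1 : K) ^ a.val = 1 := by
  rw [← pow_add]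
  exact Even.neg_one_pow ⟨a.val, rfl⟩

/-- Let `K = S_A(ΠM ⊕ M*)` (modelled as a `(ℤ/2)ⁿ`-commutative ring containing
`X i = Πeᵢ` of degree `degE i + π` and `Y i = εⁱ` of degree `degE i`), let `S` be
a homogeneous square matrix of degree `s` and `L = L_S` the associated derivation
(`L(Πeᵢ) = Σ_k Πe_k S k i`, `L(εⁱ) = -(-1)^⟨deg eᵢ, s⟩ Σ_k S i k ε^k`, graded
Leibniz rule), and let `d` be left multiplication by `ω = Σᵢ Πeᵢ εⁱ`.  Then
`[L_S, d] = 0` (i.e. `L(ωP) = (-1)^⟨s,π⟩ ω L(P)` for all `P`) if and only if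
`(1 - (-1)^⟨s,π⟩)·Σ_{u,v} Πe_u S u v ε^v = 0`, the latter holding exactly when
`⟨s, π⟩ = 0`.  In particular `[L_S,d] = 0` holds for every matrix of degree `0`
(for arbitrary odd `π`), and, when `n` is odd and `π = (1,…,1)`, for every
matrix of even degree. -/
theorem stmt19 (n r : ℕ) (K : Type*) [Ring K]
    (𝒦 : (Fin n → ZMod 2) → AddSubgroup K)
    (hcomm : ∀ (α β : Fin n → ZMod 2) (a b : K), a ∈ 𝒦 α → b ∈ 𝒦 β →
      a * b = (-1 : K) ^ (ip α β).val * (b * a))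
    (π : Fin n → ZMod 2) (hπ : ip π π = 1)
    (degE : Fin r → (Fin n → ZMod 2)) (X Y : Fin r → K)
    (hX : ∀ i, X i ∈ 𝒦 (degE i + π)) (hY : ∀ i, Y i ∈ 𝒦 (degE i))
    (s : Fin n → ZMod 2) (S : Matrix (Fin r) (Fin r) K)
    (hS : ∀ i j, S i j ∈ 𝒦 (s + degE i + degE j))
    (L : K →+ K)
    (hLX : ∀ i, L (X i) = ∑ k, X k * S k i)
    (hLY : ∀ i, L (Y i) = -((-1 : K) ^ (ip (degE i) s).val * ∑ k, S i k * Y k))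
    (hLeibXY : ∀ i, L (X i * Y i)
        = L (X i) * Y i + (-1 : K) ^ (ip s (degE i + π)).val * (X i * L (Y i)))
    (hLeib : ∀ P : K, L ((∑ i, X i * Y i) * P)
        = L (∑ i, X i * Y i) * P
          + (-1 : K) ^ (ip s π).val * ((∑ i, X i * Y i) * L P)) :
    ((∀ P : K, L ((∑ i, X i * Y i) * P)
          = (-1 : K) ^ (ip s π).val * ((∑ i, X i * Y i) * L P))
        ↔ ((1 : K) - (-1 : K) ^ (ip s π).val) * (∑ u, ∑ v, X u * (S u v * Y v)) = 0) ∧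
    (ip s π = 0 →
      ∀ P : K, L ((∑ i, X i * Y i) * P)
        = (-1 : K) ^ (ip s π).val * ((∑ i, X i * Y i) * L P)) ∧
    ((π = fun _ => (1 : ZMod 2)) → Odd n → ip s s = 0 →
      ∀ P : K, L ((∑ i, X i * Y i) * P)
        = (-1 : K) ^ (ip s π).val * ((∑ i, X i * Y i) * L P)) := by

  set c : K := (-1 : K) ^ (ip s π).val with hc
  set ω : K := ∑ i, X i * Y i with hω
  set T : K := ∑ u, ∑ v, X u * (S u v * Y v) with hT
  -- Compute L ω = (1 - c) * T
  have hLω : L ω = (1 - c) * T := by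
    have hterm : ∀ i, L (X i * Y i)
        = (∑ k, X k * S k i * Y i) - c * ∑ k, X i * (S i k * Y k) := by
      intro i
      rw [hLeibXY i, hLX i, hLY i]
      have hsign : (-1 : K) ^ (ip s (degE i + π)).val
          = (-1 : K) ^ (ip (degE i) s).val * c := by
        rw [ip_add_right, sgn_add, ip_comm s (degE i), hc]
      rw [hsign]
      have hcc : ∀ x : K, c * x = x * c := fun x =>
        (((Commute.neg_one_left x).pow_left _)).eq
      rcases Nat.even_or_odd (ip (degE i) s).val with h | h
      · rw [h.neg_one_pow]
        simp [Finset.sum_mul, Finset.mul_sum, mul_assoc, sub_eq_add_neg,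
          mul_neg, neg_mul, hcc]
      · rw [h.neg_one_pow]
        simp [Finset.sum_mul, Finset.mul_sum, mul_assoc, sub_eq_add_neg,
          mul_neg, neg_mul, hcc]
    rw [hω, map_sum]
    rw [Finset.sum_congr rfl fun i _ => hterm i]
    rw [Finset.sum_sub_distrib, ← Finset.mul_sum]
    rw [sub_mul, one_mul, hT]
    congr 1
    rw [Finset.sum_comm]
    exact Finset.sum_congr rfl fun u _ => Finset.sum_congr rfl fun v _ => by rw [mul_assoc]
  have main : (∀ P : K, L (ω * P) = c * (ω * L P)) ↔ (1 - c) * T = 0 := by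
    constructor
    · intro h
      have h1 := h 1
      have h2 := hLeib 1
      rw [h1] at h2
      have : L ω = 0 := by
        have := sub_eq_zero.mpr h2.symm
        simpa using this
      rw [← hLω, this]
    · intro h
      intro P
      rw [hLeib P, hLω, h, zero_mul, zero_add]
  refine ⟨main, ?_, ?_⟩
  · intro h0
    apply main.mpr
    have : c = 1 := by rw [hc, h0]; simp
    rw [this, sub_self, zero_mul]
  · intro hπ1 _ hss
    have h0 : ip s π = 0 := by
      rw [hπ1]
      rw [ip] at hss ⊢
      rw [← hss]
      exact Finset.sum_congr rfl fun i _ => by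
        rcases (by decide : ∀ x : ZMod 2, x * 1 = x * x) (s i) with h
        exact h
    apply main.mpr
    have : c = 1 := by rw [hc, h0]; simp
    rw [this, sub_self, zero_mul]
end
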